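/- arXiv:1905.04773 — 2 statements merged into one kernel-verified Lean document; each statement's English description precedes it below -/
import Mathlib

section
/- Let f : [a, b] → ℝ be a monotone (antitone) continuous function. For every ε > 0 there exists a finite 'staircase' polygonal curve, consisting of alternating horizontal and vertical segments whose corner points all lie on the graph of f, such that the Hausdorff distance between this polygonal curve and the graph of f is at most ε. -/
open Real

/-- A point of the Euclidean plane with given coordinates. -/
noncomputable def pt (x y : ℝ) : EuclideanSpace ℝ (Fin 2) :=
  (WithLp.equiv 2 (Fin 2 → ℝ)).symm ![x, y]

/-- The staircase polygonal curve through the points `(t i, f (t i))`: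
alternating horizontal and vertical segments. -/
noncomputable def staircase (n : ℕ) (t : Fin (n + 1) → ℝ) (f : ℝ → ℝ) :
    Set (EuclideanSpace ℝ (Fin 2)) :=
  (⋃ i : Fin n, segment ℝ (pt (t i.castSucc) (f (t i.castSucc)))
      (pt (t i.succ) (f (t i.castSucc)))) ∪
  (⋃ i : Fin n, segment ℝ (pt (t i.succ) (f (t i.castSucc)))
      (pt (t i.succ) (f (t i.succ))))

/-!
On a partition `t` of `[a, b]` whose mesh is at most `ε` and on whose cells `f` oscillates by at
most `ε`, the staircase is `ε`-close to the graph: a horizontal step at height `f (t i)` over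
`[t i, t (i+1)]` and the graph over that cell are vertically within `ε` of each other, and by the
intermediate value theorem every point of the vertical step at `t (i+1)` is `(t (i+1), f x)` for
some `x` in the same cell, hence horizontally within `ε` of the graph. Uniform continuity of `f`
on `[a, b]` provides such partitions.
-/

open Set Metric

lemma smul_pt_add_smul_pt (u v x₁ y₁ x₂ y₂ : ℝ) :
    u • pt x₁ y₁ + v • pt x₂ y₂ = pt (u * x₁ + v * x₂) (u * y₁ + v * y₂) := by
  ext i; fin_cases i <;> simp [pt]

lemma dist_pt_pt (x₁ y₁ x₂ y₂ : ℝ) :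
    dist (pt x₁ y₁) (pt x₂ y₂) = √((x₁ - x₂) ^ 2 + (y₁ - y₂) ^ 2) := by
  rw [EuclideanSpace.dist_eq, Fin.sum_univ_two]
  simp [pt, Real.dist_eq, sq_abs]

lemma dist_pt_pt_of_snd_eq (x₁ x₂ y : ℝ) : dist (pt x₁ y) (pt x₂ y) = dist x₁ x₂ := by
  simp [dist_pt_pt, Real.sqrt_sq_eq_abs, Real.dist_eq]

lemma dist_pt_pt_of_fst_eq (x y₁ y₂ : ℝ) : dist (pt x y₁) (pt x y₂) = dist y₁ y₂ := by
  simp [dist_pt_pt, Real.sqrt_sq_eq_abs, Real.dist_eq]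

lemma segment_pt_pt_of_snd_eq (x₁ x₂ y : ℝ) :
    segment ℝ (pt x₁ y) (pt x₂ y) = (pt · y) '' segment ℝ x₁ x₂ := by
  simp only [segment_eq_image, image_image, smul_pt_add_smul_pt, smul_eq_mul, ← add_mul,
    sub_add_cancel, one_mul]

lemma segment_pt_pt_of_fst_eq (x y₁ y₂ : ℝ) :
    segment ℝ (pt x y₁) (pt x y₂) = pt x '' segment ℝ y₁ y₂ := by
  simp only [segment_eq_image, image_image, smul_pt_add_smul_pt, smul_eq_mul, ← add_mul,
    sub_add_cancel, one_mul]

lemma Fin.exists_mem_Icc_castSucc_succ {n : ℕ} (hn : 0 < n) (t : Fin (n + 1) → ℝ) {x : ℝ}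
    (hx : x ∈ Icc (t 0) (t (Fin.last n))) : ∃ i : Fin n, x ∈ Icc (t i.castSucc) (t i.succ) := by
  by_contra! h
  have below : ∀ i : Fin (n + 1), t i ≤ x := fun i ↦ by
    induction i using Fin.induction with
    | zero => exact hx.1
    | succ i ih => exact (not_le.mp fun hle ↦ h i ⟨ih, hle⟩).le
  obtain ⟨m, rfl⟩ := Nat.exists_eq_add_one_of_ne_zero hn.ne'
  exact h (Fin.last m) ⟨below _, hx.2⟩

section Staircase

variable {n : ℕ} {t : Fin (n + 1) → ℝ} {f : ℝ → ℝ} {ε : ℝ}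

lemma exists_mem_graph_dist_le_of_mem_staircase (ht : Monotone t)
    (hc : ContinuousOn f (Icc (t 0) (t (Fin.last n))))
    (hmesh : ∀ i : Fin n, t i.succ - t i.castSucc ≤ ε)
    (hosc : ∀ i : Fin n, ∀ x ∈ Icc (t i.castSucc) (t i.succ), dist (f x) (f (t i.castSucc)) ≤ ε)
    {p : EuclideanSpace ℝ (Fin 2)} (hp : p ∈ staircase n t f) :
    ∃ q ∈ (fun x ↦ pt x (f x)) '' Icc (t 0) (t (Fin.last n)), dist p q ≤ ε := by
  have cell_subset (i : Fin n) : Icc (t i.castSucc) (t i.succ) ⊆ Icc (t 0) (t (Fin.last n)) :=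
    Icc_subset_Icc (ht (Fin.zero_le _)) (ht (Fin.le_last _))
  rcases hp with hp | hp <;> obtain ⟨i, hp⟩ := mem_iUnion.mp hp
  · rw [segment_pt_pt_of_snd_eq, segment_eq_Icc (ht i.castSucc_le_succ)] at hp
    obtain ⟨x, hx, rfl⟩ := hp
    refine ⟨pt x (f x), mem_image_of_mem _ (cell_subset i hx), ?_⟩
    rw [dist_pt_pt_of_fst_eq, dist_comm]
    exact hosc i x hx
  · rw [segment_pt_pt_of_fst_eq, segment_eq_uIcc] at hp
    obtain ⟨_, hy, rfl⟩ := hp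
    obtain ⟨x, hx, rfl⟩ := intermediate_value_uIcc ((hc.mono (cell_subset i)).mono
      (uIcc_of_le (ht i.castSucc_le_succ)).subset) hy
    rw [uIcc_of_le (ht i.castSucc_le_succ)] at hx
    refine ⟨pt x (f x), mem_image_of_mem _ (cell_subset i hx), ?_⟩
    rw [dist_pt_pt_of_snd_eq, Real.dist_eq, abs_of_nonneg (by linarith [hx.2])]
    linarith [hx.1, hmesh i]

lemma exists_mem_staircase_dist_le_of_mem_Icc (hn : 0 < n) (ht : Monotone t)
    (hosc : ∀ i : Fin n, ∀ x ∈ Icc (t i.castSucc) (t i.succ), dist (f x) (f (t i.castSucc)) ≤ ε)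
    {x : ℝ} (hx : x ∈ Icc (t 0) (t (Fin.last n))) :
    ∃ p ∈ staircase n t f, dist (pt x (f x)) p ≤ ε := by
  obtain ⟨i, hi⟩ := Fin.exists_mem_Icc_castSucc_succ hn t hx
  refine ⟨pt x (f (t i.castSucc)), Or.inl (mem_iUnion.mpr ⟨i, ?_⟩), ?_⟩
  · rw [segment_pt_pt_of_snd_eq, segment_eq_Icc (ht i.castSucc_le_succ)]
    exact mem_image_of_mem _ hi
  · rw [dist_pt_pt_of_fst_eq]
    exact hosc i x hi

lemma hausdorffDist_staircase_graph_le (hn : 0 < n) (ht : Monotone t)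
    (hc : ContinuousOn f (Icc (t 0) (t (Fin.last n)))) (hε : 0 ≤ ε)
    (hmesh : ∀ i : Fin n, t i.succ - t i.castSucc ≤ ε)
    (hosc : ∀ i : Fin n, ∀ x ∈ Icc (t i.castSucc) (t i.succ), dist (f x) (f (t i.castSucc)) ≤ ε) :
    hausdorffDist (staircase n t f) ((fun x ↦ pt x (f x)) '' Icc (t 0) (t (Fin.last n))) ≤ ε :=
  hausdorffDist_le_of_mem_dist hε
    (fun _ hp ↦ exists_mem_graph_dist_le_of_mem_staircase ht hc hmesh hosc hp)
    (fun _ ⟨_, hx, hq⟩ ↦ hq ▸ exists_mem_staircase_dist_le_of_mem_Icc hn ht hosc hx)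

end Staircase

lemma exists_strictMono_partition_mesh_le {a b η : ℝ} (hab : a < b) (hη : 0 < η) :
    ∃ (n : ℕ) (t : Fin (n + 1) → ℝ), 0 < n ∧ StrictMono t ∧ t 0 = a ∧ t (Fin.last n) = b ∧
      ∀ i : Fin n, t i.succ - t i.castSucc ≤ η := by
  obtain ⟨n, hn⟩ := exists_nat_gt ((b - a) / η)
  have hn₀ : (0 : ℝ) < n := (div_pos (sub_pos.mpr hab) hη).trans hn
  refine ⟨n, fun i ↦ a + i * ((b - a) / n), by exact_mod_cast hn₀, ?_, by simp, ?_, fun i ↦ ?_⟩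
  · intro i j hij
    have : (i : ℝ) < j := by exact_mod_cast hij
    dsimp only
    gcongr
  · simp only [Fin.val_last]
    field_simp
    ring
  · simp only [Fin.val_succ, Fin.val_castSucc, Nat.cast_add, Nat.cast_one]
    rw [div_lt_iff₀ hη] at hn
    rw [show a + (i + 1) * ((b - a) / n) - (a + i * ((b - a) / n)) = (b - a) / n by ring,
      div_le_iff₀ hn₀]
    linarith

theorem staircase_approximation_of_antitone_continuous_general
    (a b : ℝ) (hab : a < b) (f : ℝ → ℝ)
    (hc : ContinuousOn f (Set.Icc a b)) :
    ∀ ε > 0, ∃ (n : ℕ) (t : Fin (n + 1) → ℝ), 0 < n ∧ StrictMono t ∧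
      t 0 = a ∧ t (Fin.last n) = b ∧
      Metric.hausdorffDist (staircase n t f)
        ((fun x => pt x (f x)) '' Set.Icc a b) ≤ ε := by
  intro ε hε
  obtain ⟨δ, hδ, hδf⟩ := Metric.uniformContinuousOn_iff.mp
    (isCompact_Icc.uniformContinuousOn_of_continuous hc) ε hε
  obtain ⟨n, t, hn, ht, rfl, rfl, hmesh⟩ :=
    exists_strictMono_partition_mesh_le hab (lt_min (half_pos hδ) hε)
  refine ⟨n, t, hn, ht, rfl, rfl, hausdorffDist_staircase_graph_le hn ht.monotone hc hε.le
    (fun i ↦ (hmesh i).trans (min_le_right _ _)) fun i x hx ↦ (hδf _ ?_ _ ?_ ?_).le⟩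
  · exact Icc_subset_Icc (ht.monotone (Fin.zero_le _)) (ht.monotone (Fin.le_last _)) hx
  · exact ⟨ht.monotone (Fin.zero_le _), ht.monotone (Fin.le_last _)⟩
  · rw [Real.dist_eq, abs_of_nonneg (sub_nonneg.mpr hx.1)]
    linarith [hx.2, hmesh i, min_le_left (δ / 2) ε]

theorem staircase_approximation_of_antitone_continuous
    (a b : ℝ) (hab : a < b) (f : ℝ → ℝ)
    (hf : AntitoneOn f (Set.Icc a b))
    (hc : ContinuousOn f (Set.Icc a b)) :
    ∀ ε > 0, ∃ (n : ℕ) (t : Fin (n + 1) → ℝ), 0 < n ∧ StrictMono t ∧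
      t 0 = a ∧ t (Fin.last n) = b ∧
      Metric.hausdorffDist (staircase n t f)
        ((fun x => pt x (f x)) '' Set.Icc a b) ≤ ε :=
  staircase_approximation_of_antitone_continuous_general a b hab f hc
end

section
/- Let f : [a,b] → ℝ be monotone decreasing (antitone). Then for any partition a = t_0 < t_1 < … < t_n = b with mesh δ, the Hausdorff distance between the graph of f and the staircase curve through the points (t_i, f(t_i)) is at most δ + (f(a) − f(b)) (and more precisely at most δ + max_i (f(t_i) − f(t_{i+1}))). -/
/-!
Over each interval `[tᵢ, tᵢ₊₁]` the graph point `(x, f x)` lies directly below the point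
`(x, f tᵢ)` of the horizontal step, at distance `f tᵢ - f x ≤ f tᵢ - f tᵢ₊₁` since `f` is
antitone. Conversely a point of the horizontal step is within `tᵢ₊₁ - tᵢ ≤ δ` of its left corner
`(tᵢ, f tᵢ)`, and a point of the vertical step is within the jump `f tᵢ - f tᵢ₊₁` of its lower
corner `(tᵢ₊₁, f tᵢ₊₁)`, both corners lying on the graph. Hence the Hausdorff distance is at most
`max δ M ≤ δ + M`, where `M` bounds the jumps, and `M = f a - f b` is such a bound.
-/

open Real

open Set

theorem Fin.Icc_subset_iUnion_Icc_castSucc_succ {α : Type*} [LinearOrder α] {n : ℕ}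
    (hn : 0 < n) (t : Fin (n + 1) → α) :
    Icc (t 0) (t (Fin.last n)) ⊆ ⋃ i : Fin n, Icc (t i.castSucc) (t i.succ) := by
  induction n with
  | zero => omega
  | succ n ih =>
    rcases n.eq_zero_or_pos with rfl | hn
    · exact subset_iUnion_of_subset 0 subset_rfl
    · calc Icc (t 0) (t (Fin.last (n + 1)))
          ⊆ Icc (t 0) (t (Fin.last n).castSucc) ∪
              Icc (t (Fin.last n).castSucc) (t (Fin.last (n + 1))) :=
            Icc_subset_Icc_union_Icc
        _ ⊆ ⋃ i : Fin (n + 1), Icc (t i.castSucc) (t i.succ) := by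
          refine union_subset ((ih hn (Fin.init t)).trans ?_)
            (subset_iUnion_of_subset (Fin.last n) subset_rfl)
          exact iUnion_subset fun i => subset_iUnion_of_subset i.castSucc
            (by simp only [Fin.init, Fin.succ_castSucc, subset_rfl])

lemma smul_pt_add_smul_pt_s5 (c d x y x' y' : ℝ) :
    c • pt x y + d • pt x' y' = pt (c * x + d * x') (c * y + d * y') := by
  ext i
  fin_cases i <;> simp [pt]

lemma dist_pt (x y x' y' : ℝ) :
    dist (pt x y) (pt x' y') = √((x - x') ^ 2 + (y - y') ^ 2) := by
  simp [pt, EuclideanSpace.dist_eq, Fin.sum_univ_two, Real.dist_eq, sq_abs]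

lemma dist_pt_horizontal (x x' y : ℝ) : dist (pt x y) (pt x' y) = |x - x'| := by
  simp [dist_pt, Real.sqrt_sq_eq_abs]

lemma dist_pt_vertical (x y y' : ℝ) : dist (pt x y) (pt x y') = |y - y'| := by
  simp [dist_pt, Real.sqrt_sq_eq_abs]

lemma segment_pt_horizontal (x x' y : ℝ) :
    segment ℝ (pt x y) (pt x' y) = (fun u => pt u y) '' segment ℝ x x' := by
  rw [segment_eq_image, segment_eq_image, image_image]
  refine image_congr fun θ _ => ?_
  simp only [smul_pt_add_smul_pt_s5, smul_eq_mul]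
  ring_nf

lemma segment_pt_vertical (x y y' : ℝ) :
    segment ℝ (pt x y) (pt x y') = pt x '' segment ℝ y y' := by
  rw [segment_eq_image, segment_eq_image, image_image]
  refine image_congr fun θ _ => ?_
  simp only [smul_pt_add_smul_pt_s5, smul_eq_mul]
  ring_nf

lemma Monotone.apply_mem_Icc_zero_last {α : Type*} [Preorder α] {n : ℕ} {t : Fin (n + 1) → α}
    (ht : Monotone t) (j : Fin (n + 1)) : t j ∈ Icc (t 0) (t (Fin.last n)) :=
  ⟨ht (Fin.zero_le j), ht (Fin.le_last j)⟩

section Staircase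

variable {n : ℕ} {t : Fin (n + 1) → ℝ} {f : ℝ → ℝ} {δ M : ℝ}

lemma exists_mem_staircase_dist_le (hn : 0 < n) (ht : Monotone t)
    (hf : AntitoneOn f (Icc (t 0) (t (Fin.last n))))
    (hM : ∀ i : Fin n, f (t i.castSucc) - f (t i.succ) ≤ M)
    {x : ℝ} (hx : x ∈ Icc (t 0) (t (Fin.last n))) :
    ∃ p ∈ staircase n t f, dist (pt x (f x)) p ≤ M := by
  obtain ⟨i, hi⟩ := mem_iUnion.1 (Fin.Icc_subset_iUnion_Icc_castSucc_succ hn t hx)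
  refine ⟨pt x (f (t i.castSucc)), Or.inl (mem_iUnion.2 ⟨i, ?_⟩), ?_⟩
  · rw [segment_pt_horizontal, segment_eq_Icc (hi.1.trans hi.2)]
    exact mem_image_of_mem _ hi
  · have hleft := hf (ht.apply_mem_Icc_zero_last _) hx hi.1
    have hright := hf hx (ht.apply_mem_Icc_zero_last _) hi.2
    rw [dist_pt_vertical, abs_sub_comm, abs_of_nonneg (sub_nonneg.2 hleft)]
    linarith [hM i]

lemma exists_mem_graph_dist_le (ht : Monotone t)
    (hf : AntitoneOn f (Icc (t 0) (t (Fin.last n))))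
    (hδ : ∀ i : Fin n, t i.succ - t i.castSucc ≤ δ)
    (hM : ∀ i : Fin n, f (t i.castSucc) - f (t i.succ) ≤ M)
    {p : EuclideanSpace ℝ (Fin 2)} (hp : p ∈ staircase n t f) :
    ∃ q ∈ (fun x => pt x (f x)) '' Icc (t 0) (t (Fin.last n)), dist p q ≤ max δ M := by
  have hmem := ht.apply_mem_Icc_zero_last
  rcases hp with hp | hp <;> obtain ⟨i, hp⟩ := mem_iUnion.1 hp
  · rw [segment_pt_horizontal, segment_eq_Icc (ht (Fin.castSucc_le_succ i))] at hp
    obtain ⟨u, hu, rfl⟩ := hp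
    refine ⟨_, mem_image_of_mem _ (hmem i.castSucc), ?_⟩
    rw [dist_pt_horizontal, abs_of_nonneg (sub_nonneg.2 hu.1)]
    exact le_max_of_le_left (by linarith [hδ i, hu.2])
  · rw [segment_pt_vertical, segment_symm,
      segment_eq_Icc (hf (hmem _) (hmem _) (ht (Fin.castSucc_le_succ i)))] at hp
    obtain ⟨v, hv, rfl⟩ := hp
    refine ⟨_, mem_image_of_mem _ (hmem i.succ), ?_⟩
    rw [dist_pt_vertical, abs_of_nonneg (sub_nonneg.2 hv.1)]
    exact le_max_of_le_right (by linarith [hM i, hv.2])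

theorem hausdorffDist_graph_staircase_le (hn : 0 < n) (ht : Monotone t)
    (hf : AntitoneOn f (Icc (t 0) (t (Fin.last n))))
    (hδ : ∀ i : Fin n, t i.succ - t i.castSucc ≤ δ)
    (hM : ∀ i : Fin n, f (t i.castSucc) - f (t i.succ) ≤ M) :
    Metric.hausdorffDist ((fun x => pt x (f x)) '' Icc (t 0) (t (Fin.last n)))
      (staircase n t f) ≤ max δ M := by
  have hδ₀ : 0 ≤ δ := (sub_nonneg.2 (ht (Fin.castSucc_le_succ ⟨0, hn⟩))).trans (hδ _)
  refine Metric.hausdorffDist_le_of_mem_dist (le_max_of_le_left hδ₀) ?_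
    fun p hp => exists_mem_graph_dist_le ht hf hδ hM hp
  rintro _ ⟨x, hx, rfl⟩
  obtain ⟨p, hp, hdist⟩ := exists_mem_staircase_dist_le hn ht hf hM hx
  exact ⟨p, hp, hdist.trans (le_max_right δ M)⟩

end Staircase

theorem staircase_hausdorff_bound_general
    (a b : ℝ) (f : ℝ → ℝ) (hf : AntitoneOn f (Set.Icc a b))
    (n : ℕ) (hn : 0 < n) (t : Fin (n + 1) → ℝ) (ht : StrictMono t)
    (h0 : t 0 = a) (hl : t (Fin.last n) = b)
    (δ : ℝ) (hδ : ∀ i : Fin n, t i.succ - t i.castSucc ≤ δ) :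
    Metric.hausdorffDist ((fun x => pt x (f x)) '' Set.Icc a b)
        (staircase n t f) ≤ δ + (f a - f b) ∧
    ∀ M : ℝ, (∀ i : Fin n, f (t i.castSucc) - f (t i.succ) ≤ M) →
      Metric.hausdorffDist ((fun x => pt x (f x)) '' Set.Icc a b)
        (staircase n t f) ≤ δ + M := by
  subst h0 hl
  have hmem := ht.monotone.apply_mem_Icc_zero_last
  have bound : ∀ M : ℝ, (∀ i : Fin n, f (t i.castSucc) - f (t i.succ) ≤ M) →
      Metric.hausdorffDist ((fun x => pt x (f x)) '' Icc (t 0) (t (Fin.last n)))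
        (staircase n t f) ≤ δ + M := by
    intro M hM
    let i₀ : Fin n := ⟨0, hn⟩
    have hstep := ht.monotone (Fin.castSucc_le_succ i₀)
    have hδ₀ : 0 ≤ δ := (sub_nonneg.2 hstep).trans (hδ i₀)
    have hM₀ : 0 ≤ M := (sub_nonneg.2 (hf (hmem _) (hmem _) hstep)).trans (hM i₀)
    exact (hausdorffDist_graph_staircase_le hn ht.monotone hf hδ hM).trans
      (max_le_add_of_nonneg hδ₀ hM₀)
  refine ⟨bound _ fun i => sub_le_sub ?_ ?_, bound⟩
  · exact hf (hmem 0) (hmem _) (ht.monotone (Fin.zero_le _))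
  · exact hf (hmem _) (hmem _) (ht.monotone (Fin.le_last _))

theorem staircase_hausdorff_bound
    (a b : ℝ) (hab : a < b) (f : ℝ → ℝ) (hf : AntitoneOn f (Set.Icc a b))
    (n : ℕ) (hn : 0 < n) (t : Fin (n + 1) → ℝ) (ht : StrictMono t)
    (h0 : t 0 = a) (hl : t (Fin.last n) = b)
    (δ : ℝ) (hδ : ∀ i : Fin n, t i.succ - t i.castSucc ≤ δ) :
    Metric.hausdorffDist ((fun x => pt x (f x)) '' Set.Icc a b)
        (staircase n t f) ≤ δ + (f a - f b) ∧
    ∀ M : ℝ, (∀ i : Fin n, f (t i.castSucc) - f (t i.succ) ≤ M) →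
      Metric.hausdorffDist ((fun x => pt x (f x)) '' Set.Icc a b)
        (staircase n t f) ≤ δ + M :=
  staircase_hausdorff_bound_general a b f hf n hn t ht h0 hl δ hδ
end
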